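/- arXiv:1604.03340 — 6 statements merged into one kernel-verified Lean document; each statement's English description precedes it below -/
import Mathlib

section
/- Let m = m_r + i·m_i ∈ ℂ with m_r ≠ 0 and |m_r| < 1, let α ∈ ℂ, and let N ∈ {0,1,2,…} satisfy N < (m_r² + m_i²)/|m_r| ≤ N + 1. Then the set S = {j ∈ ℤ : −π < Im((α + 2πi·j)/m) < π} is finite, and its cardinality is either N or N + 1. -/
/-- Counting integers `j` with `A < c*j < B` when `0 < c`: the count is `N` or `N+1`
provided `N < (B-A)/c ≤ N+1`. -/
lemma count_aux (c A B : ℝ) (hc : 0 < c) (N : ℕ)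
    (h1 : (N : ℝ) < (B - A) / c) (h2 : (B - A) / c ≤ (N : ℝ) + 1) :
    ({j : ℤ | A < c * j ∧ c * j < B}).Finite ∧
    (({j : ℤ | A < c * j ∧ c * j < B}).ncard = N ∨
      ({j : ℤ | A < c * j ∧ c * j < B}).ncard = N + 1) := by
  set u := A / c with hu
  set v := B / c with hv
  rw [sub_div] at h1 h2
  have hset : {j : ℤ | A < c * j ∧ c * j < B} = ↑(Finset.Ioo ⌊u⌋ ⌈v⌉) := by
    ext j
    simp only [Set.mem_setOf_eq, Finset.coe_Ioo, Set.mem_Ioo, Int.floor_lt, Int.lt_ceil,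
      hu, hv, div_lt_iff₀ hc, lt_div_iff₀ hc]
    constructor <;> rintro ⟨p, q⟩ <;> exact ⟨by linarith, by linarith⟩
  have hb1 : (N : ℤ) < ⌈v⌉ - ⌊u⌋ := by
    have : (N : ℝ) < ((⌈v⌉ - ⌊u⌋ : ℤ) : ℝ) := by
      push_cast
      linarith [Int.le_ceil v, Int.floor_le u]
    exact_mod_cast this
  have hb2 : ⌈v⌉ - ⌊u⌋ < (N : ℤ) + 3 := by
    have : ((⌈v⌉ - ⌊u⌋ : ℤ) : ℝ) < (N : ℝ) + 3 := by
      push_cast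
      linarith [Int.ceil_lt_add_one v, Int.sub_one_lt_floor u]
    exact_mod_cast this
  refine ⟨by rw [hset]; exact (Finset.Ioo _ _).finite_toSet, ?_⟩
  rw [hset, Set.ncard_coe_finset, Int.card_Ioo]
  omega

/-- For `m = m_r + i m_i` with `m_r ≠ 0`, `|m_r| < 1`, and `N` with
`N < (m_r² + m_i²)/|m_r| ≤ N + 1`, the set
`S = {j ∈ ℤ : −π < Im((α + 2πi j)/m) < π}` is finite with `#S ∈ {N, N+1}`. -/
theorem stmt1 (m : ℂ) (hre : m.re ≠ 0) (hlt : |m.re| < 1) (α : ℂ) (N : ℕ)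
    (hN1 : (N : ℝ) < (m.re ^ 2 + m.im ^ 2) / |m.re|)
    (hN2 : (m.re ^ 2 + m.im ^ 2) / |m.re| ≤ (N : ℝ) + 1) :
    Set.Finite {j : ℤ | -Real.pi < ((α + 2 * Real.pi * Complex.I * (j : ℂ)) / m).im ∧
        ((α + 2 * Real.pi * Complex.I * (j : ℂ)) / m).im < Real.pi} ∧
    (Set.ncard {j : ℤ | -Real.pi < ((α + 2 * Real.pi * Complex.I * (j : ℂ)) / m).im ∧
        ((α + 2 * Real.pi * Complex.I * (j : ℂ)) / m).im < Real.pi} = N ∨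
     Set.ncard {j : ℤ | -Real.pi < ((α + 2 * Real.pi * Complex.I * (j : ℂ)) / m).im ∧
        ((α + 2 * Real.pi * Complex.I * (j : ℂ)) / m).im < Real.pi} = N + 1) := by
  have hpi : (0:ℝ) < Real.pi := Real.pi_pos
  have hr : (0:ℝ) < m.re ^ 2 + m.im ^ 2 := by
    have h1 : (0:ℝ) < m.re ^ 2 := by positivity
    nlinarith [sq_nonneg m.im]
  set r : ℝ := m.re ^ 2 + m.im ^ 2 with hrdef
  have him : ∀ j : ℤ, ((α + 2 * Real.pi * Complex.I * (j : ℂ)) / m).im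
      = ((α.im + 2 * Real.pi * j) * m.re - α.re * m.im) / r := by
    intro j
    rw [Complex.div_im]
    simp [Complex.normSq_apply, hrdef]
    ring
  rcases lt_or_gt_of_ne hre with hneg | hpos
  · -- m.re < 0, use c = -2π m.re > 0
    have hc : (0:ℝ) < -(2 * Real.pi * m.re) := by nlinarith
    have habs : |m.re| = -m.re := abs_of_neg hneg
    have hBA : ((Real.pi * r + α.im * m.re - α.re * m.im)
        - (-(Real.pi * r) + α.im * m.re - α.re * m.im)) / -(2 * Real.pi * m.re)
        = r / |m.re| := by
      rw [habs]
      field_simp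
      ring
    have key := count_aux (-(2 * Real.pi * m.re))
      (-(Real.pi * r) + α.im * m.re - α.re * m.im)
      (Real.pi * r + α.im * m.re - α.re * m.im) hc N
      (by rw [hBA]; exact hN1) (by rw [hBA]; exact hN2)
    have hset : {j : ℤ | -Real.pi < ((α + 2 * Real.pi * Complex.I * (j : ℂ)) / m).im ∧
        ((α + 2 * Real.pi * Complex.I * (j : ℂ)) / m).im < Real.pi}
        = {j : ℤ | -(Real.pi * r) + α.im * m.re - α.re * m.im < -(2 * Real.pi * m.re) * j ∧
            -(2 * Real.pi * m.re) * j < Real.pi * r + α.im * m.re - α.re * m.im} := by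
      ext j
      simp only [Set.mem_setOf_eq, him j, lt_div_iff₀ hr, div_lt_iff₀ hr]
      constructor <;> rintro ⟨p, q⟩ <;> exact ⟨by nlinarith, by nlinarith⟩
    rw [hset]
    exact key
  · -- m.re > 0, use c = 2π m.re > 0
    have hc : (0:ℝ) < 2 * Real.pi * m.re := by positivity
    have habs : |m.re| = m.re := abs_of_pos hpos
    have hBA : ((Real.pi * r - α.im * m.re + α.re * m.im)
        - (-(Real.pi * r) - α.im * m.re + α.re * m.im)) / (2 * Real.pi * m.re)
        = r / |m.re| := by
      rw [habs]
      field_simp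
      ring
    have key := count_aux (2 * Real.pi * m.re)
      (-(Real.pi * r) - α.im * m.re + α.re * m.im)
      (Real.pi * r - α.im * m.re + α.re * m.im) hc N
      (by rw [hBA]; exact hN1) (by rw [hBA]; exact hN2)
    have hset : {j : ℤ | -Real.pi < ((α + 2 * Real.pi * Complex.I * (j : ℂ)) / m).im ∧
        ((α + 2 * Real.pi * Complex.I * (j : ℂ)) / m).im < Real.pi}
        = {j : ℤ | -(Real.pi * r) - α.im * m.re + α.re * m.im < 2 * Real.pi * m.re * j ∧
            2 * Real.pi * m.re * j < Real.pi * r - α.im * m.re + α.re * m.im} := by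
      ext j
      simp only [Set.mem_setOf_eq, him j, lt_div_iff₀ hr, div_lt_iff₀ hr]
      constructor <;> rintro ⟨p, q⟩ <;> exact ⟨by nlinarith, by nlinarith⟩
    rw [hset]
    exact key
end

section
/- Let m ∈ ℂ and t ∈ ℝ be such that (m + 1 + i·t)/2 is not an integer. Then Γ((m+1+it)/2)·Γ((−m+1−it)/2) · [ 1/(Γ((−3m+1−it)/2)·Γ((3m+1+it)/2)) + 1/(Γ((m+1−it)/2)·Γ((−m+1+it)/2)) ] = 2·cos(π·m). -/
lemma recip_gamma_mul (w : ℂ) :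
    1 / (Complex.Gamma w * Complex.Gamma (1 - w)) =
      Complex.sin (Real.pi * w) / Real.pi := by
  rw [Complex.Gamma_mul_Gamma_one_sub, one_div_div]

/-- Key Gamma-function identity:
`Γ((m+1+it)/2)·Γ((−m+1−it)/2)·[1/(Γ((−3m+1−it)/2)Γ((3m+1+it)/2)) + 1/(Γ((m+1−it)/2)Γ((−m+1+it)/2))] = 2cos(πm)`. -/
theorem stmt4 (m : ℂ) (t : ℝ) (h : ∀ n : ℤ, (m + 1 + Complex.I * (t : ℂ)) / 2 ≠ (n : ℂ)) :
    Complex.Gamma ((m + 1 + Complex.I * t) / 2) * Complex.Gamma ((-m + 1 - Complex.I * t) / 2) *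
      (1 / (Complex.Gamma ((-3 * m + 1 - Complex.I * t) / 2) *
            Complex.Gamma ((3 * m + 1 + Complex.I * t) / 2)) +
       1 / (Complex.Gamma ((m + 1 - Complex.I * t) / 2) *
            Complex.Gamma ((-m + 1 + Complex.I * t) / 2))) =
      2 * Complex.cos (Real.pi * m) := by
  set a : ℂ := (m + 1 + Complex.I * t) / 2 with ha
  have e1 : (-m + 1 - Complex.I * t) / 2 = 1 - a := by rw [ha]; ring
  have e2 : (-3 * m + 1 - Complex.I * t) / 2 = 1 - (a + m) := by rw [ha]; ring
  have e3 : (3 * m + 1 + Complex.I * t) / 2 = a + m := by rw [ha]; ring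
  have e4 : (m + 1 - Complex.I * t) / 2 = 1 - (a - m) := by rw [ha]; ring
  have e5 : (-m + 1 + Complex.I * t) / 2 = a - m := by rw [ha]; ring
  rw [e1, e2, e3, e4, e5, mul_comm (Complex.Gamma (1 - (a + m))),
    mul_comm (Complex.Gamma (1 - (a - m)))]
  rw [recip_gamma_mul (a + m), recip_gamma_mul (a - m),
    Complex.Gamma_mul_Gamma_one_sub]
  have hs : Complex.sin (Real.pi * a) ≠ 0 := by
    intro hz
    obtain ⟨k, hk⟩ := Complex.sin_eq_zero_iff.mp hz
    have hπ : (Real.pi : ℂ) ≠ 0 := by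
      exact_mod_cast Complex.ofReal_ne_zero.mpr Real.pi_ne_zero
    have : a = (k : ℂ) := by
      apply mul_left_cancel₀ hπ
      rw [hk]; ring
    exact h k this
  have hπ : (Real.pi : ℂ) ≠ 0 := by
    exact_mod_cast Complex.ofReal_ne_zero.mpr Real.pi_ne_zero
  rw [mul_add, mul_add, mul_sub, Complex.sin_add, Complex.sin_sub]
  field_simp
  ring
end

section
/- Let m ∈ ℂ and let z ∈ ℂ ∖ (−∞,0]. Then 𝕀_m is twice complex differentiable at z and 𝕀_m''(z) − (m² − 1/4)·z^{−2}·𝕀_m(z) − 𝕀_m(z) = 0; likewise 𝒥_m is twice complex differentiable at z and 𝒥_m''(z) − (m² − 1/4)·z^{−2}·𝒥_m(z) + 𝒥_m(z) = 0. -/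
/-!
With `t = z / 2`, both series have the form `t ^ (m + 1/2) * F (t ^ 2)`, where
`F u = ∑ aₙ uⁿ` and `(n + 1) (n + 1 + m) aₙ₊₁ = ε aₙ`, with `ε = 1` for `𝕀_m` and `ε = -1`
for `𝒥_m`. The recurrence makes `F` entire (a ratio test), and termwise it is the ODE
`u F'' + (m + 1) F' = ε F`. Differentiating `t ^ (m + 1/2) F (t ^ 2)` twice and using
`(m + 1/2) (m - 1/2) = m ^ 2 - 1/4` turns this ODE into the Bessel equation
`f'' - (m ^ 2 - 1/4) z⁻² f - ε f = 0`.
-/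

open MeasureTheory

/-- The modified Bessel function for dimension 1,
`𝕀_m(z) = Σ_{n=0}^∞ √π (z/2)^(2n+m+1/2) / (n! Γ(m+n+1))`, with principal branch powers. -/
noncomputable def Ibes (m z : ℂ) : ℂ :=
  ∑' n : ℕ, (Real.sqrt Real.pi : ℂ) * (z / 2) ^ (2 * (n : ℂ) + m + 1 / 2) /
    ((n.factorial : ℂ) * Complex.Gamma (m + (n : ℂ) + 1))

/-- The Bessel function for dimension 1,
`𝒥_m(z) = Σ_{n=0}^∞ (−1)^n √π (z/2)^(2n+m+1/2) / (n! Γ(m+n+1))`, with principal branch powers. -/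
noncomputable def Jbes (m z : ℂ) : ℂ :=
  ∑' n : ℕ, (-1 : ℂ) ^ n * (Real.sqrt Real.pi : ℂ) * (z / 2) ^ (2 * (n : ℂ) + m + 1 / 2) /
    ((n.factorial : ℂ) * Complex.Gamma (m + (n : ℂ) + 1))

open Complex Filter Topology

namespace DimOneBessel

lemma deriv_deriv_eq_of_eqOn {𝕜 E : Type*} [NontriviallyNormedField 𝕜] [NormedAddCommGroup E]
    [NormedSpace 𝕜 E] {U : Set 𝕜} {f g g' g'' : 𝕜 → E} (hU : IsOpen U) (hfg : Set.EqOn f g U)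
    (hg : ∀ w ∈ U, HasDerivAt g (g' w) w) (hg' : ∀ w ∈ U, HasDerivAt g' (g'' w) w) {z : 𝕜}
    (hz : z ∈ U) :
    DifferentiableAt 𝕜 f z ∧ DifferentiableAt 𝕜 (deriv f) z ∧ deriv (deriv f) z = g'' z := by
  have hf : ∀ w ∈ U, f =ᶠ[𝓝 w] g := fun w hw => hfg.eventuallyEq_of_mem (hU.mem_nhds hw)
  have hdf : deriv f =ᶠ[𝓝 z] g' := by
    filter_upwards [hU.mem_nhds hz] with w hw
    exact (hf w hw).deriv_eq.trans (hg w hw).deriv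
  exact ⟨(hf z hz).differentiableAt_iff.2 (hg z hz).differentiableAt,
    hdf.differentiableAt_iff.2 (hg' z hz).differentiableAt, hdf.deriv_eq.trans (hg' z hz).deriv⟩

noncomputable def pseries (a : ℕ → ℂ) (u : ℂ) : ℂ := ∑' n, a n * u ^ n

noncomputable def derivCoeff (a : ℕ → ℂ) (n : ℕ) : ℂ := ((n + 1 : ℕ) : ℂ) * a (n + 1)

def HasInfiniteRadius (a : ℕ → ℂ) : Prop := ∀ r : ℝ, 0 ≤ r → Summable fun n => ‖a n‖ * r ^ n

def BesselRecurrence (m ε : ℂ) (a : ℕ → ℂ) : Prop :=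
  ∀ n : ℕ, ((n : ℂ) + 1) * ((n : ℂ) + 1 + m) * a (n + 1) = ε * a n

section PowerSeries

variable {a : ℕ → ℂ}

lemma HasInfiniteRadius.summable (ha : HasInfiniteRadius a) (u : ℂ) :
    Summable fun n => a n * u ^ n :=
  .of_norm_bounded (ha ‖u‖ (norm_nonneg u)) fun n => by rw [norm_mul, norm_pow]

lemma HasInfiniteRadius.summable_natCast_mul (ha : HasInfiniteRadius a) {r : ℝ} (hr : 0 ≤ r) :
    Summable fun n : ℕ => n * ‖a n‖ * r ^ n := by
  refine .of_nonneg_of_le (fun n => by positivity) (fun n => ?_) (ha (2 * r) (by positivity))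
  have hn : (n : ℝ) ≤ 2 ^ n := by exact_mod_cast n.lt_two_pow_self.le
  calc (n : ℝ) * ‖a n‖ * r ^ n ≤ 2 ^ n * ‖a n‖ * r ^ n := by gcongr
    _ = ‖a n‖ * (2 * r) ^ n := by ring

lemma HasInfiniteRadius.derivCoeff (ha : HasInfiniteRadius a) :
    HasInfiniteRadius (derivCoeff a) := by
  intro r hr
  refine .of_nonneg_of_le (fun n => by positivity) (fun n => ?_)
    ((summable_nat_add_iff 1).2 (ha.summable_natCast_mul (r := r + 1) (by positivity)))
  have hpow : r ^ n ≤ (r + 1) ^ (n + 1) :=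
    (pow_le_pow_left₀ hr (by linarith) n).trans (pow_le_pow_right₀ (by linarith) n.le_succ)
  rw [DimOneBessel.derivCoeff, norm_mul, Complex.norm_natCast]
  gcongr

lemma HasInfiniteRadius.of_norm_succ_le {q : ℕ → ℝ} (hq : Tendsto q atTop (𝓝 0))
    (h : ∀ᶠ n in atTop, ‖a (n + 1)‖ ≤ q n * ‖a n‖) : HasInfiniteRadius a := by
  intro r hr
  have hsmall : ∀ᶠ n in atTop, q n * r < 1 / 2 :=
    (hq.mul_const r).eventually (gt_mem_nhds (by norm_num))
  refine summable_of_ratio_norm_eventually_le (r := 1 / 2) (by norm_num) ?_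
  filter_upwards [h, hsmall] with n hn hsn
  rw [Real.norm_of_nonneg (by positivity), Real.norm_of_nonneg (by positivity)]
  calc ‖a (n + 1)‖ * r ^ (n + 1) ≤ q n * ‖a n‖ * r ^ (n + 1) := by gcongr
    _ = (q n * r) * (‖a n‖ * r ^ n) := by ring
    _ ≤ 1 / 2 * (‖a n‖ * r ^ n) := by gcongr

lemma hasDerivAt_pseries (ha : HasInfiniteRadius a) (w : ℂ) :
    HasDerivAt (pseries a) (pseries (derivCoeff a) w) w := by
  set R := ‖w‖ + 1
  have hR : 1 ≤ R := le_add_of_nonneg_left (norm_nonneg w)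
  have hw : w ∈ Metric.ball (0 : ℂ) R := by simp [R]
  have hbound : ∀ n, ∀ y ∈ Metric.ball (0 : ℂ) R,
      ‖a n * (n * y ^ (n - 1))‖ ≤ n * ‖a n‖ * R ^ n := by
    intro n y hy
    rw [mem_ball_zero_iff] at hy
    have hy' : ‖y‖ ^ (n - 1) ≤ R ^ n :=
      (pow_le_pow_left₀ (norm_nonneg _) hy.le _).trans (pow_le_pow_right₀ hR (n.sub_le 1))
    rw [norm_mul, norm_mul, norm_pow, Complex.norm_natCast]
    calc ‖a n‖ * (n * ‖y‖ ^ (n - 1)) = n * ‖a n‖ * ‖y‖ ^ (n - 1) := by ring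
      _ ≤ n * ‖a n‖ * R ^ n := by gcongr
  have hsum := ha.summable_natCast_mul (r := R) (by positivity)
  have hderiv := hasDerivAt_tsum_of_isPreconnected hsum Metric.isOpen_ball
    (convex_ball 0 R).isPreconnected (fun n y _ => (hasDerivAt_pow n y).const_mul (a n))
    hbound hw (ha.summable w) hw
  have hshift : ∑' n, a n * (n * w ^ (n - 1)) = pseries (derivCoeff a) w := by
    rw [(Summable.of_norm_bounded hsum fun n => hbound n w hw).tsum_eq_zero_add]
    simp [pseries, derivCoeff, mul_left_comm, mul_assoc]
  exact hshift ▸ hderiv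

lemma HasInfiniteRadius.of_besselRecurrence {m ε : ℂ} (hrec : BesselRecurrence m ε a) :
    HasInfiniteRadius a := by
  refine .of_norm_succ_le (q := fun n : ℕ => ‖ε‖ * (1 / ((n : ℝ) + 1)))
    (by simpa using tendsto_one_div_add_atTop_nhds_zero_nat.const_mul ‖ε‖) ?_
  filter_upwards [eventually_ge_atTop ⌈‖m‖⌉₊] with n hn
  have hm : 1 ≤ ‖(n : ℂ) + 1 + m‖ := by
    have h1 := norm_sub_le ((n : ℂ) + 1 + m) m
    have h2 : ‖m‖ ≤ n := Nat.ceil_le.1 hn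
    rw [add_sub_cancel_right, ← Nat.cast_add_one, Complex.norm_natCast] at h1
    push_cast at h1
    linarith
  have hnorm := congrArg norm (hrec n)
  rw [norm_mul, norm_mul, norm_mul, ← Nat.cast_add_one, Complex.norm_natCast] at hnorm
  push_cast at hnorm
  rw [show ‖ε‖ * (1 / ((n : ℝ) + 1)) * ‖a n‖ = ‖ε‖ * ‖a n‖ / (n + 1) by ring,
    le_div_iff₀ (by positivity), ← hnorm]
  nlinarith [mul_le_mul_of_nonneg_left hm (by positivity : (0 : ℝ) ≤ (n + 1) * ‖a (n + 1)‖)]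

lemma pseries_recurrence_ode {m ε : ℂ} (hrec : BesselRecurrence m ε a) (u : ℂ) :
    u * pseries (derivCoeff (derivCoeff a)) u + (m + 1) * pseries (derivCoeff a) u =
      ε * pseries a u := by
  have ha := HasInfiniteRadius.of_besselRecurrence hrec
  have hF₂ : HasSum (fun n : ℕ => n * (n + 1) * a (n + 1) * u ^ n)
      (u * pseries (derivCoeff (derivCoeff a)) u) := by
    have hshift : (fun n => u * (derivCoeff (derivCoeff a) n * u ^ n)) =
        fun n : ℕ => ((n + 1 : ℕ) : ℂ) * ((n + 1 : ℕ) + 1) * a (n + 1 + 1) * u ^ (n + 1) := by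
      funext n
      simp only [derivCoeff]
      push_cast
      ring
    have := (ha.derivCoeff.derivCoeff.summable u).hasSum.mul_left u
    rw [hshift] at this
    rw [← hasSum_nat_add_iff' 1]
    simpa [pseries] using this
  have hF₁ := (ha.derivCoeff.summable u).hasSum.mul_left (m + 1)
  refine (hF₂.add hF₁).unique ?_
  have hterm : (fun n => ε * (a n * u ^ n)) = fun n : ℕ =>
      n * (n + 1) * a (n + 1) * u ^ n + (m + 1) * (derivCoeff a n * u ^ n) := by
    funext n
    rw [← mul_assoc, ← hrec, derivCoeff]
    push_cast
    ring
  simpa only [hterm, pseries] using (ha.summable u).hasSum.mul_left ε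

end PowerSeries

lemma div_two_mem_slitPlane {w : ℂ} (hw : w ∈ slitPlane) : w / 2 ∈ slitPlane := by
  rw [mem_slitPlane_iff] at hw ⊢
  simpa [div_re, div_im] using hw

lemma hasDerivAt_half_cpow_mul {ν w H' : ℂ} {H : ℂ → ℂ} (hw : w ∈ slitPlane)
    (hH : HasDerivAt H H' w) :
    HasDerivAt (fun x => (x / 2) ^ ν * H x) ((w / 2) ^ ν * (ν / w * H w + H')) w := by
  have hpow := ((hasDerivAt_id w).div_const 2).cpow_const (c := ν) (div_two_mem_slitPlane hw)
  refine (hpow.mul hH).congr_deriv ?_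
  rw [id, cpow_sub _ _ (div_ne_zero (slitPlane_ne_zero hw) two_ne_zero), cpow_one]
  field_simp

lemma hasDerivAt_comp_half_sq {f : ℂ → ℂ} {f' w : ℂ} (hf : HasDerivAt f f' ((w / 2) ^ 2)) :
    HasDerivAt (fun x => f ((x / 2) ^ 2)) (f' * (w / 2)) w := by
  refine (hf.comp w (((hasDerivAt_id w).div_const 2).pow 2)).congr_deriv ?_
  simp only [id]
  push_cast
  ring

noncomputable def besselSeries (m : ℂ) (a : ℕ → ℂ) (w : ℂ) : ℂ :=
  (w / 2) ^ (m + 1 / 2) * pseries a ((w / 2) ^ 2)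

noncomputable def besselSeriesDerivFactor (m : ℂ) (a : ℕ → ℂ) (w : ℂ) : ℂ :=
  (m + 1 / 2) / w * pseries a ((w / 2) ^ 2) + pseries (derivCoeff a) ((w / 2) ^ 2) * (w / 2)

section BesselSeries

variable {m : ℂ} {a : ℕ → ℂ} {w : ℂ}

lemma hasDerivAt_besselSeries (ha : HasInfiniteRadius a) (hw : w ∈ slitPlane) :
    HasDerivAt (besselSeries m a) ((w / 2) ^ (m + 1 / 2) * besselSeriesDerivFactor m a w) w :=
  hasDerivAt_half_cpow_mul hw (hasDerivAt_comp_half_sq (hasDerivAt_pseries ha _))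

lemma hasDerivAt_besselSeriesDerivFactor (ha : HasInfiniteRadius a) (hw : w ≠ 0) :
    HasDerivAt (besselSeriesDerivFactor m a)
      (-(m + 1 / 2) / w ^ 2 * pseries a ((w / 2) ^ 2)
        + (m + 1 / 2) / 2 * pseries (derivCoeff a) ((w / 2) ^ 2)
        + pseries (derivCoeff (derivCoeff a)) ((w / 2) ^ 2) * (w / 2) ^ 2
        + pseries (derivCoeff a) ((w / 2) ^ 2) / 2) w := by
  have hinv := (hasDerivAt_const w (m + 1 / 2)).div (hasDerivAt_id w) hw
  have hF := hasDerivAt_comp_half_sq (hasDerivAt_pseries ha ((w / 2) ^ 2))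
  have hF' := hasDerivAt_comp_half_sq (hasDerivAt_pseries ha.derivCoeff ((w / 2) ^ 2))
  refine ((hinv.mul hF).add (hF'.mul ((hasDerivAt_id w).div_const 2))).congr_deriv ?_
  simp only [id, Pi.div_apply]
  field_simp
  ring

end BesselSeries

theorem besselSeries_ode {m ε : ℂ} {a : ℕ → ℂ} (hrec : BesselRecurrence m ε a) {B : ℂ → ℂ}
    (hB : Set.EqOn B (besselSeries m a) slitPlane) {z : ℂ} (hz : z ∈ slitPlane) :
    DifferentiableAt ℂ B z ∧ DifferentiableAt ℂ (deriv B) z ∧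
      deriv (deriv B) z - (m ^ 2 - 1 / 4) * z ^ (-2 : ℤ) * B z - ε * B z = 0 := by
  have ha := HasInfiniteRadius.of_besselRecurrence hrec
  obtain ⟨hB₁, hB₂, hB₃⟩ := deriv_deriv_eq_of_eqOn isOpen_slitPlane hB
    (fun w hw => hasDerivAt_besselSeries ha hw)
    (fun w hw => hasDerivAt_half_cpow_mul hw
      (hasDerivAt_besselSeriesDerivFactor ha (slitPlane_ne_zero hw))) hz
  refine ⟨hB₁, hB₂, ?_⟩
  have hz0 := slitPlane_ne_zero hz
  have key := pseries_recurrence_ode hrec ((z / 2) ^ 2)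
  rw [hB₃, hB hz, besselSeries, besselSeriesDerivFactor, zpow_neg, zpow_two]
  -- Freeze the non-polynomial factors so that `field_simp` only clears the powers of `z`.
  generalize (z / 2) ^ (m + 1 / 2) = c
  generalize pseries a ((z / 2) ^ 2) = F₀ at key ⊢
  generalize pseries (derivCoeff a) ((z / 2) ^ 2) = F₁ at key ⊢
  generalize pseries (derivCoeff (derivCoeff a)) ((z / 2) ^ 2) = F₂ at key ⊢
  field_simp
  linear_combination 16 * c * z ^ 2 * key

noncomputable def besselCoeff (m ε : ℂ) (n : ℕ) : ℂ :=
  ε ^ n * (Real.sqrt Real.pi : ℂ) / (n.factorial * Gamma (m + n + 1))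

-- Mathlib's `Γ` vanishes at its poles, so `(Γ s)⁻¹ = s (Γ (s + 1))⁻¹` holds for every `s`
-- and no case split on `m` is needed.
lemma besselCoeff_recurrence (m ε : ℂ) : BesselRecurrence m ε (besselCoeff m ε) := by
  intro n
  have hΓ := one_div_Gamma_eq_self_mul_one_div_Gamma_add_one (m + n + 1)
  simp only [besselCoeff, div_eq_mul_inv, mul_inv, Nat.factorial_succ]
  push_cast
  rw [hΓ, show m + ((n : ℂ) + 1) + 1 = m + n + 1 + 1 by ring]
  field_simp
  ring

lemma tsum_eq_besselSeries (m ε : ℂ) {w : ℂ} (hw : w ≠ 0) :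
    ∑' n : ℕ, ε ^ n * (Real.sqrt Real.pi : ℂ) * (w / 2) ^ (2 * (n : ℂ) + m + 1 / 2) /
      ((n.factorial : ℂ) * Gamma (m + (n : ℂ) + 1)) = besselSeries m (besselCoeff m ε) w := by
  rw [besselSeries, pseries, ← tsum_mul_left]
  refine tsum_congr fun n => ?_
  rw [show 2 * (n : ℂ) + m + 1 / 2 = m + 1 / 2 + (2 * n : ℕ) by push_cast; ring,
    cpow_add _ _ (div_ne_zero hw two_ne_zero), cpow_natCast, pow_mul, besselCoeff]
  ring

end DimOneBessel

/-- `𝕀_m` solves the modified Bessel equation for dimension 1, and `𝒥_m` solves the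
standard Bessel equation for dimension 1, on `ℂ ∖ (−∞,0]`. -/
theorem stmt5 (m z : ℂ) (hz : z ∈ Complex.slitPlane) :
    (DifferentiableAt ℂ (Ibes m) z ∧ DifferentiableAt ℂ (deriv (Ibes m)) z ∧
      deriv (deriv (Ibes m)) z - (m ^ 2 - 1 / 4) * z ^ (-2 : ℤ) * Ibes m z - Ibes m z = 0) ∧
    (DifferentiableAt ℂ (Jbes m) z ∧ DifferentiableAt ℂ (deriv (Jbes m)) z ∧
      deriv (deriv (Jbes m)) z - (m ^ 2 - 1 / 4) * z ^ (-2 : ℤ) * Jbes m z + Jbes m z = 0) := by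
  have hI : Set.EqOn (Ibes m) (DimOneBessel.besselSeries m (DimOneBessel.besselCoeff m 1))
      Complex.slitPlane := fun w hw => by
    simpa [Ibes] using DimOneBessel.tsum_eq_besselSeries m 1 (Complex.slitPlane_ne_zero hw)
  have hJ : Set.EqOn (Jbes m) (DimOneBessel.besselSeries m (DimOneBessel.besselCoeff m (-1)))
      Complex.slitPlane := fun w hw =>
    DimOneBessel.tsum_eq_besselSeries m (-1) (Complex.slitPlane_ne_zero hw)
  obtain ⟨hI₁, hI₂, hI₃⟩ :=
    DimOneBessel.besselSeries_ode (DimOneBessel.besselCoeff_recurrence m 1) hI hz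
  obtain ⟨hJ₁, hJ₂, hJ₃⟩ :=
    DimOneBessel.besselSeries_ode (DimOneBessel.besselCoeff_recurrence m (-1)) hJ hz
  exact ⟨⟨hI₁, hI₂, by linear_combination hI₃⟩, ⟨hJ₁, hJ₂, by linear_combination hJ₃⟩⟩
end

section
/- Let m, m' ∈ ℂ with Re(m) > −1 and Re(m') > −1. Then, as t → +∞ along the reals, Γ((m+1−it)/2)·Γ((m'+1+it)/2) / ( Γ((m+1+it)/2)·Γ((m'+1−it)/2) ) → e^{−iπ(m−m')/2}. -/
/-!
Euler's limit formula writes `Γ(c - is)Γ(d + is) / (Γ(c + is)Γ(d - is))` as the product of the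
factors `1 + u_j = (c + is + j)(d - is + j) / ((c - is + j)(d + is + j))`, where
`u_j = 2is(d - c) / ((c - is + j)(d + is + j))`. For large `s` the denominator has size
`≍ j² + s²`, so `log (1 + u_j) = 2i(d - c) s / (j² + s²) + O(1 / (j² + s²))`. Comparing with the
telescoping sum of `arctan ((j + 1) / s) - arctan (j / s)` shows `∑ s / (j² + s²) → π / 2`, while
`∑ 1 / (j² + s²) = O(1 / s)`; hence the logarithm of the ratio tends to `iπ(d - c)`. The theorem is
the case `c = (m + 1) / 2`, `d = (m' + 1) / 2`, `s = t / 2`.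
-/

open Filter
open Real Topology Finset

lemma arctan_sub_arctan_mem {x s : ℝ} (hx : 0 ≤ x) (hs : 0 < s) :
    arctan ((x + 1) / s) - arctan (x / s) ∈
      Set.Icc (s / ((x + 1) ^ 2 + s ^ 2)) (s / (x ^ 2 + s ^ 2)) := by
  obtain ⟨y, ⟨hxy, hyx⟩, hslope⟩ := exists_hasDerivAt_eq_slope arctan (fun y => 1 / (1 + y ^ 2))
    (div_lt_div_of_pos_right (lt_add_one x) hs) continuous_arctan.continuousOn
    (fun y _ => hasDerivAt_arctan y)
  have hdiff : arctan ((x + 1) / s) - arctan (x / s) = s / (s ^ 2 + (s * y) ^ 2) := by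
    rw [show (x + 1) / s - x / s = 1 / s by ring] at hslope
    field_simp at hslope ⊢
    linear_combination -hslope
  rw [div_lt_iff₀ hs] at hxy
  rw [lt_div_iff₀ hs] at hyx
  rw [hdiff]
  constructor <;> apply div_le_div_of_nonneg_left hs.le (by positivity) <;> nlinarith

lemma hasSum_arctan_sub_arctan {s : ℝ} (hs : 0 < s) :
    HasSum (fun j : ℕ => arctan ((j + 1) / s) - arctan (j / s)) (π / 2) := by
  refine (hasSum_iff_tendsto_nat_of_nonneg (fun j => ?_) _).2 ?_
  · exact sub_nonneg.2 <| arctan_strictMono.monotone <| by gcongr; linarith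
  have htel (n : ℕ) : ∑ j ∈ range n, (arctan ((j + 1) / s) - arctan (j / s)) = arctan (n / s) := by
    simpa using Finset.sum_range_sub (fun j : ℕ => arctan (j / s)) n
  simp_rw [htel]
  exact (tendsto_arctan_atTop.mono_right nhdsWithin_le_nhds).comp
    (tendsto_natCast_atTop_atTop.atTop_div_const hs)

lemma div_succ_sq_add_sq_le_arctan_sub_arctan {s : ℝ} (hs : 0 < s) (j : ℕ) :
    s / ((j + 1 : ℕ) ^ 2 + s ^ 2) ≤ arctan ((j + 1) / s) - arctan (j / s) := by
  exact_mod_cast (arctan_sub_arctan_mem j.cast_nonneg hs).1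

lemma summable_div_sq_add_sq {s : ℝ} (hs : 0 < s) :
    Summable (fun j : ℕ => s / (j ^ 2 + s ^ 2)) :=
  (summable_nat_add_iff 1).1 <| (hasSum_arctan_sub_arctan hs).summable.of_nonneg_of_le
    (fun _ => by positivity) (div_succ_sq_add_sq_le_arctan_sub_arctan hs)

lemma tsum_div_sq_add_sq_mem {s : ℝ} (hs : 0 < s) :
    ∑' j : ℕ, s / (j ^ 2 + s ^ 2) ∈ Set.Icc (π / 2) (π / 2 + 1 / s) := by
  have hW := hasSum_arctan_sub_arctan hs
  have hsum := summable_div_sq_add_sq hs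
  constructor
  · exact hW.tsum_eq ▸ hW.summable.tsum_le_tsum
      (fun j => (arctan_sub_arctan_mem j.cast_nonneg hs).2) hsum
  · have htail : ∑' j : ℕ, s / ((j + 1 : ℕ) ^ 2 + s ^ 2) ≤ π / 2 :=
      hW.tsum_eq ▸ ((summable_nat_add_iff 1).2 hsum).tsum_le_tsum
        (div_succ_sq_add_sq_le_arctan_sub_arctan hs) hW.summable
    rw [hsum.tsum_eq_zero_add]
    have h0 : s / (((0 : ℕ) : ℝ) ^ 2 + s ^ 2) = 1 / s := by field_simp; ring
    linarith

lemma tendsto_tsum_div_sq_add_sq :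
    Tendsto (fun s : ℝ => ∑' j : ℕ, s / (j ^ 2 + s ^ 2)) atTop (𝓝 (π / 2)) := by
  have hupper : Tendsto (fun s : ℝ => π / 2 + 1 / s) atTop (𝓝 (π / 2)) := by
    simpa using tendsto_const_nhds.add ((tendsto_const_nhds (x := (1 : ℝ))).div_atTop tendsto_id)
  refine tendsto_of_tendsto_of_tendsto_of_le_of_le' tendsto_const_nhds hupper ?_ ?_ <;>
    filter_upwards [eventually_gt_atTop 0] with s hs
  exacts [(tsum_div_sq_add_sq_mem hs).1, (tsum_div_sq_add_sq_mem hs).2]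

open Complex

lemma norm_log_one_add_sub_self_le_sq {z : ℂ} (hz : ‖z‖ ≤ 1 / 2) :
    ‖log (1 + z) - z‖ ≤ ‖z‖ ^ 2 := by
  have hinv : (1 - ‖z‖)⁻¹ ≤ 2 := by
    rw [inv_le_comm₀ (by linarith) two_pos]; linarith
  calc ‖log (1 + z) - z‖ ≤ ‖z‖ ^ 2 * (1 - ‖z‖)⁻¹ / 2 :=
        norm_log_one_add_sub_self_le (by linarith)
    _ ≤ ‖z‖ ^ 2 * 2 / 2 := by gcongr
    _ = ‖z‖ ^ 2 := by ring

lemma ne_neg_natCast_of_re_pos {z : ℂ} (hz : 0 < z.re) (m : ℕ) : z ≠ -m := by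
  rintro rfl
  simp only [neg_re, natCast_re, Left.neg_pos_iff] at hz
  exact (Nat.cast_nonneg m).not_gt hz

lemma sq_add_sq_le_four_mul_norm_sq {w : ℂ} {x s : ℝ} (hx : 0 ≤ x) (hs : 0 ≤ s)
    (hre : x ≤ w.re) (him : s ≤ 2 * |w.im|) : x ^ 2 + s ^ 2 ≤ 4 * ‖w‖ ^ 2 := by
  rw [Complex.sq_norm, normSq_apply]
  nlinarith [sq_abs w.im, abs_nonneg w.im]

lemma tendsto_prod_div_Gamma {a b a' b' : ℂ} (hab : a + b = a' + b')
    (ha : ∀ m : ℕ, a ≠ -m) (hb : ∀ m : ℕ, b ≠ -m) (ha' : ∀ m : ℕ, a' ≠ -m)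
    (hb' : ∀ m : ℕ, b' ≠ -m) :
    Tendsto (fun n : ℕ => ∏ j ∈ range (n + 1), (a' + j) * (b' + j) / ((a + j) * (b + j)))
      atTop (𝓝 (Gamma a * Gamma b / (Gamma a' * Gamma b'))) := by
  refine (((GammaSeq_tendsto_Gamma a).mul (GammaSeq_tendsto_Gamma b)).div
    ((GammaSeq_tendsto_Gamma a').mul (GammaSeq_tendsto_Gamma b'))
    (mul_ne_zero (Gamma_ne_zero ha') (Gamma_ne_zero hb'))).congr' ?_
  filter_upwards [eventually_ne_atTop 0] with n hn
  have hprod {z : ℂ} (hz : ∀ m : ℕ, z ≠ -m) : ∏ j ∈ range (n + 1), (z + j) ≠ 0 :=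
    prod_ne_zero_iff.2 fun j _ h => hz j (eq_neg_of_add_eq_zero_left h)
  have hn' : (n : ℂ) ≠ 0 := Nat.cast_ne_zero.2 hn
  have hpow : (n : ℂ) ^ a * (n : ℂ) ^ b = (n : ℂ) ^ a' * (n : ℂ) ^ b' := by
    rw [← cpow_add _ _ hn', ← cpow_add _ _ hn', hab]
  have hpow_ne (z : ℂ) : (n : ℂ) ^ z ≠ 0 := by simp [hn']
  show Complex.GammaSeq a n * Complex.GammaSeq b n /
    (Complex.GammaSeq a' n * Complex.GammaSeq b' n) = _
  simp only [Complex.GammaSeq, prod_div_distrib, prod_mul_distrib]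
  field_simp [hprod ha, hprod hb, hprod ha', hprod hb', hpow_ne, Nat.factorial_ne_zero]
  linear_combination hpow

noncomputable def gammaRatioTerm (c d : ℂ) (s : ℝ) (j : ℕ) : ℂ :=
  2 * I * s * (d - c) / ((c - I * s + j) * (d + I * s + j))

section
variable {c d : ℂ}

lemma add_mul_I_add_natCast_ne_zero (hc : 0 < c.re) (s : ℝ) (j : ℕ) : c + I * s + j ≠ 0 :=
  fun h => ne_neg_natCast_of_re_pos (by simpa using hc) j (eq_neg_of_add_eq_zero_left h)

lemma sub_mul_I_add_natCast_ne_zero (hc : 0 < c.re) (s : ℝ) (j : ℕ) : c - I * s + j ≠ 0 := by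
  simpa [sub_eq_add_neg] using add_mul_I_add_natCast_ne_zero hc (-s) j

lemma one_add_gammaRatioTerm (hc : 0 < c.re) (hd : 0 < d.re) (s : ℝ) (j : ℕ) :
    1 + gammaRatioTerm c d s j =
      (c + I * s + j) * (d - I * s + j) / ((c - I * s + j) * (d + I * s + j)) := by
  rw [gammaRatioTerm]
  field_simp [sub_mul_I_add_natCast_ne_zero hc s j, add_mul_I_add_natCast_ne_zero hd s j]
  ring

lemma one_add_gammaRatioTerm_ne_zero (hc : 0 < c.re) (hd : 0 < d.re) (s : ℝ) (j : ℕ) :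
    1 + gammaRatioTerm c d s j ≠ 0 := by
  rw [one_add_gammaRatioTerm hc hd]
  exact div_ne_zero
    (mul_ne_zero (add_mul_I_add_natCast_ne_zero hc s j) (sub_mul_I_add_natCast_ne_zero hd s j))
    (mul_ne_zero (sub_mul_I_add_natCast_ne_zero hc s j) (add_mul_I_add_natCast_ne_zero hd s j))

lemma tendsto_prod_one_add_gammaRatioTerm (hc : 0 < c.re) (hd : 0 < d.re) (s : ℝ) :
    Tendsto (fun n : ℕ => ∏ j ∈ range (n + 1), (1 + gammaRatioTerm c d s j)) atTop
      (𝓝 (Gamma (c - I * s) * Gamma (d + I * s) / (Gamma (c + I * s) * Gamma (d - I * s)))) := by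
  have hre {z : ℂ} (hz : 0 < z.re) (t : ℝ) : 0 < (z + I * t).re := by simpa using hz
  have hre' {z : ℂ} (hz : 0 < z.re) (t : ℝ) : 0 < (z - I * t).re := by simpa using hz
  refine (tendsto_prod_div_Gamma (by ring) (ne_neg_natCast_of_re_pos (hre' hc s))
    (ne_neg_natCast_of_re_pos (hre hd s)) (ne_neg_natCast_of_re_pos (hre hc s))
    (ne_neg_natCast_of_re_pos (hre' hd s))).congr fun n => prod_congr rfl fun j _ => ?_
  exact (one_add_gammaRatioTerm hc hd s j).symm

variable {s : ℝ}

lemma sq_add_sq_div_four_le_norm_mul (hc : 0 ≤ c.re) (hd : 0 ≤ d.re) (hcs : 2 * |c.im| ≤ s)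
    (hds : 2 * |d.im| ≤ s) (j : ℕ) :
    (j ^ 2 + s ^ 2) / 4 ≤ ‖(c - I * s + j) * (d + I * s + j)‖ := by
  have hs : 0 ≤ s := le_trans (by positivity) hcs
  have hc' : (j : ℝ) ^ 2 + s ^ 2 ≤ 4 * ‖c - I * s + j‖ ^ 2 := by
    refine sq_add_sq_le_four_mul_norm_sq j.cast_nonneg hs (by simpa using hc) ?_
    rw [show (c - I * s + j).im = c.im - s by simp]
    linarith [neg_le_abs (c.im - s), le_abs_self c.im]
  have hd' : (j : ℝ) ^ 2 + s ^ 2 ≤ 4 * ‖d + I * s + j‖ ^ 2 := by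
    refine sq_add_sq_le_four_mul_norm_sq j.cast_nonneg hs (by simpa using hd) ?_
    rw [show (d + I * s + j).im = d.im + s by simp]
    linarith [le_abs_self (d.im + s), neg_abs_le d.im]
  rw [norm_mul, ← pow_le_pow_iff_left₀ (by positivity) (by positivity) two_ne_zero, mul_pow]
  calc ((j ^ 2 + s ^ 2) / 4) ^ 2 = (j ^ 2 + s ^ 2) / 4 * ((j ^ 2 + s ^ 2) / 4) := sq _
    _ ≤ ‖c - I * s + j‖ ^ 2 * ‖d + I * s + j‖ ^ 2 :=
      mul_le_mul (by linarith) (by linarith) (by positivity) (sq_nonneg _)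

lemma norm_gammaRatioTerm_le (hc : 0 ≤ c.re) (hd : 0 ≤ d.re) (hs : 0 < s)
    (hcs : 2 * |c.im| ≤ s) (hds : 2 * |d.im| ≤ s) (j : ℕ) :
    ‖gammaRatioTerm c d s j‖ ≤ 8 * ‖d - c‖ * (s / (j ^ 2 + s ^ 2)) := by
  have hD := sq_add_sq_div_four_le_norm_mul hc hd hcs hds j
  rw [gammaRatioTerm, norm_div, norm_mul, norm_mul, norm_mul]
  simp only [Complex.norm_ofNat, norm_I, norm_real, Real.norm_eq_abs, abs_of_pos hs, mul_one]
  calc 2 * s * ‖d - c‖ / ‖(c - I * s + j) * (d + I * s + j)‖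
      ≤ 2 * s * ‖d - c‖ / ((j ^ 2 + s ^ 2) / 4) := by gcongr
    _ = 8 * ‖d - c‖ * (s / (j ^ 2 + s ^ 2)) := by field_simp; ring

lemma norm_gammaRatioTerm_sub_le (hc : 0 ≤ c.re) (hd : 0 ≤ d.re) (hs : 1 ≤ s)
    (hcs : 2 * |c.im| ≤ s) (hds : 2 * |d.im| ≤ s) (j : ℕ) :
    ‖gammaRatioTerm c d s j - 2 * I * (d - c) * ((s / (j ^ 2 + s ^ 2) : ℝ) : ℂ)‖ ≤
      8 * ‖d - c‖ * (‖c + d‖ + ‖c * d‖ + ‖c - d‖) / (j ^ 2 + s ^ 2) := by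
  set N : ℝ := j ^ 2 + s ^ 2 with hN
  set D := (c - I * s + j) * (d + I * s + j) with hD
  have hN0 : 0 < N := by positivity
  have hDN := sq_add_sq_div_four_le_norm_mul hc hd hcs hds j
  have hD0 : D ≠ 0 := norm_pos_iff.1 (lt_of_lt_of_le (by positivity) hDN)
  have hN0' : (N : ℂ) ≠ 0 := ofReal_ne_zero.2 hN0.ne'
  have hsub : D - N = j * (c + d) + c * d + I * s * (c - d) := by
    rw [hD, hN]; push_cast; linear_combination (-(s : ℂ) ^ 2) * I_sq
  have hsubN : s * ‖D - N‖ ≤ N * (‖c + d‖ + ‖c * d‖ + ‖c - d‖) := by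
    have hnorm : ‖D - N‖ ≤ j * ‖c + d‖ + ‖c * d‖ + s * ‖c - d‖ := by
      rw [hsub]
      refine (norm_add₃_le ..).trans_eq ?_
      simp [abs_of_pos (by linarith : (0 : ℝ) < s)]
    have hsj : s * j ≤ N := by nlinarith [sq_nonneg (s - j)]
    have hs' : s ≤ N := by nlinarith [sq_nonneg (j : ℝ)]
    have hs2 : s * s ≤ N := by nlinarith [sq_nonneg (j : ℝ)]
    calc s * ‖D - N‖ ≤ s * (j * ‖c + d‖ + ‖c * d‖ + s * ‖c - d‖) := by gcongr
      _ = s * j * ‖c + d‖ + s * ‖c * d‖ + s * s * ‖c - d‖ := by ring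
      _ ≤ N * ‖c + d‖ + N * ‖c * d‖ + N * ‖c - d‖ := by gcongr
      _ = _ := by ring
  have hid : gammaRatioTerm c d s j - 2 * I * (d - c) * ((s / N : ℝ) : ℂ) =
      2 * I * s * (d - c) * (N - D) / (D * N) := by
    rw [gammaRatioTerm, ← hD]
    push_cast
    field_simp
  rw [hid, norm_div, norm_mul, norm_mul, norm_mul, norm_mul, norm_mul, norm_sub_rev (N : ℂ)]
  simp only [Complex.norm_ofNat, norm_I, norm_real, Real.norm_eq_abs,
    abs_of_pos (by linarith : (0 : ℝ) < s), abs_of_pos hN0, mul_one]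
  calc 2 * s * ‖d - c‖ * ‖D - N‖ / (‖D‖ * N) ≤ 2 * ‖d - c‖ * (s * ‖D - N‖) / (N / 4 * N) := by
        rw [show 2 * s * ‖d - c‖ * ‖D - N‖ = 2 * ‖d - c‖ * (s * ‖D - N‖) by ring]
        gcongr
    _ ≤ 2 * ‖d - c‖ * (N * (‖c + d‖ + ‖c * d‖ + ‖c - d‖)) / (N / 4 * N) := by gcongr
    _ = _ := by field_simp; ring

lemma norm_log_one_add_gammaRatioTerm_sub_le (hc : 0 ≤ c.re) (hd : 0 ≤ d.re) (hs : 1 ≤ s)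
    (hcs : 2 * |c.im| ≤ s) (hds : 2 * |d.im| ≤ s) (hdc : 16 * ‖d - c‖ ≤ s) (j : ℕ) :
    ‖log (1 + gammaRatioTerm c d s j) - 2 * I * (d - c) * ((s / (j ^ 2 + s ^ 2) : ℝ) : ℂ)‖ ≤
      (64 * ‖d - c‖ ^ 2 + 8 * ‖d - c‖ * (‖c + d‖ + ‖c * d‖ + ‖c - d‖)) / (j ^ 2 + s ^ 2) := by
  set u := gammaRatioTerm c d s j
  have hN0 : 0 < (j : ℝ) ^ 2 + s ^ 2 := by positivity
  have hs2 : s ^ 2 ≤ (j : ℝ) ^ 2 + s ^ 2 := by nlinarith [sq_nonneg (j : ℝ)]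
  have hu : ‖u‖ ≤ 8 * ‖d - c‖ * (s / (j ^ 2 + s ^ 2)) :=
    norm_gammaRatioTerm_le hc hd (by linarith) hcs hds j
  have hu_half : ‖u‖ ≤ 1 / 2 := by
    refine hu.trans ?_
    rw [mul_div_assoc', div_le_div_iff₀ hN0 two_pos]
    nlinarith [norm_nonneg (d - c)]
  have hu_sq : ‖u‖ ^ 2 ≤ 64 * ‖d - c‖ ^ 2 / (j ^ 2 + s ^ 2) := by
    calc ‖u‖ ^ 2 ≤ (8 * ‖d - c‖ * (s / (j ^ 2 + s ^ 2))) ^ 2 := by gcongr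
      _ = 64 * ‖d - c‖ ^ 2 * s ^ 2 / (j ^ 2 + s ^ 2) / (j ^ 2 + s ^ 2) := by
        field_simp; ring
      _ ≤ 64 * ‖d - c‖ ^ 2 * ((j : ℝ) ^ 2 + s ^ 2) / (j ^ 2 + s ^ 2) / (j ^ 2 + s ^ 2) := by
        gcongr
      _ = 64 * ‖d - c‖ ^ 2 / (j ^ 2 + s ^ 2) := by field_simp
  calc _ = ‖(log (1 + u) - u) + (u - 2 * I * (d - c) * ((s / (j ^ 2 + s ^ 2) : ℝ) : ℂ))‖ := by
        rw [sub_add_sub_cancel]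
    _ ≤ ‖u‖ ^ 2 + 8 * ‖d - c‖ * (‖c + d‖ + ‖c * d‖ + ‖c - d‖) / (j ^ 2 + s ^ 2) :=
        (norm_add_le _ _).trans (add_le_add (norm_log_one_add_sub_self_le_sq hu_half)
          (norm_gammaRatioTerm_sub_le hc hd hs hcs hds j))
    _ ≤ _ := by rw [add_div]; gcongr

lemma eventually_norm_log_one_add_gammaRatioTerm_sub_le (hc : 0 ≤ c.re) (hd : 0 ≤ d.re) :
    ∃ A : ℝ, ∀ᶠ s : ℝ in atTop, ∀ j : ℕ,
      ‖log (1 + gammaRatioTerm c d s j) - 2 * I * (d - c) * ((s / (j ^ 2 + s ^ 2) : ℝ) : ℂ)‖ ≤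
        A / s * (s / (j ^ 2 + s ^ 2)) := by
  refine ⟨64 * ‖d - c‖ ^ 2 + 8 * ‖d - c‖ * (‖c + d‖ + ‖c * d‖ + ‖c - d‖), ?_⟩
  filter_upwards [eventually_ge_atTop 1, eventually_ge_atTop (2 * |c.im|),
    eventually_ge_atTop (2 * |d.im|), eventually_ge_atTop (16 * ‖d - c‖)]
    with s hs hcs hds hdc j
  refine (norm_log_one_add_gammaRatioTerm_sub_le hc hd hs hcs hds hdc j).trans_eq ?_
  field_simp

lemma eventually_summable_gammaRatioTerm (hc : 0 ≤ c.re) (hd : 0 ≤ d.re) :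
    ∀ᶠ s : ℝ in atTop, Summable (gammaRatioTerm c d s) := by
  filter_upwards [eventually_gt_atTop 0, eventually_ge_atTop (2 * |c.im|),
    eventually_ge_atTop (2 * |d.im|)] with s hs hcs hds
  exact ((summable_div_sq_add_sq hs).mul_left _).of_norm_bounded
    (norm_gammaRatioTerm_le hc hd hs hcs hds)

lemma tendsto_tsum_log_one_add_gammaRatioTerm (hc : 0 ≤ c.re) (hd : 0 ≤ d.re) :
    Tendsto (fun s : ℝ => ∑' j : ℕ, log (1 + gammaRatioTerm c d s j)) atTop
      (𝓝 (π * (d - c) * I)) := by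
  obtain ⟨A, hA⟩ := eventually_norm_log_one_add_gammaRatioTerm_sub_le hc hd
  have hmain : Tendsto (fun s : ℝ => 2 * I * (d - c) * ((∑' j : ℕ, s / (j ^ 2 + s ^ 2) : ℝ) : ℂ))
      atTop (𝓝 (2 * I * (d - c) * ((π / 2 : ℝ) : ℂ))) :=
    ((continuous_ofReal.tendsto _).comp tendsto_tsum_div_sq_add_sq).const_mul _
  have herr : Tendsto (fun s : ℝ => A / s * ∑' j : ℕ, s / (j ^ 2 + s ^ 2)) atTop (𝓝 0) := by
    simpa using ((tendsto_const_nhds (x := A)).div_atTop tendsto_id).mul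
      tendsto_tsum_div_sq_add_sq
  have hdiff : Tendsto (fun s : ℝ => ∑' j : ℕ, log (1 + gammaRatioTerm c d s j) -
      2 * I * (d - c) * ((∑' j : ℕ, s / (j ^ 2 + s ^ 2) : ℝ) : ℂ)) atTop (𝓝 0) := by
    refine squeeze_zero_norm' ?_ herr
    filter_upwards [hA, eventually_summable_gammaRatioTerm hc hd, eventually_gt_atTop 0]
      with s hbound hsum hs
    have hg := summable_div_sq_add_sq hs
    have hv : Summable fun j : ℕ => 2 * I * (d - c) * ((s / (j ^ 2 + s ^ 2) : ℝ) : ℂ) :=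
      (summable_ofReal.2 hg).mul_left _
    rw [ofReal_tsum, ← tsum_mul_left, ← (summable_log_one_add_of_summable hsum).tsum_sub hv,
      ← tsum_mul_left]
    exact tsum_of_norm_bounded (hg.mul_left (A / s)).hasSum hbound
  have hlim : (π * (d - c) * I : ℂ) = 0 + 2 * I * (d - c) * ((π / 2 : ℝ) : ℂ) := by
    push_cast; ring
  rw [hlim]
  exact (hdiff.add hmain).congr fun s => sub_add_cancel _ _

end

theorem tendsto_Gamma_mul_Gamma_div_Gamma_mul_Gamma {c d : ℂ} (hc : 0 < c.re) (hd : 0 < d.re) :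
    Tendsto (fun s : ℝ =>
      Gamma (c - I * s) * Gamma (d + I * s) / (Gamma (c + I * s) * Gamma (d - I * s)))
      atTop (𝓝 (exp (π * (d - c) * I))) := by
  refine ((Complex.continuous_exp.tendsto _).comp
    (tendsto_tsum_log_one_add_gammaRatioTerm hc.le hd.le)).congr' ?_
  filter_upwards [eventually_summable_gammaRatioTerm hc.le hd.le] with s hsum
  have hprod := hasProd_of_hasSum_log (one_add_gammaRatioTerm_ne_zero hc hd s)
    (summable_log_one_add_of_summable hsum).hasSum
  exact tendsto_nhds_unique (hprod.tendsto_prod_nat.comp (tendsto_add_atTop_nat 1))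
    (tendsto_prod_one_add_gammaRatioTerm hc hd s)

/-- As `t → +∞`,
`Γ((m+1−it)/2)Γ((m'+1+it)/2) / (Γ((m+1+it)/2)Γ((m'+1−it)/2)) → e^{−iπ(m−m')/2}`. -/
theorem stmt6 (m m' : ℂ) (hm : -1 < m.re) (hm' : -1 < m'.re) :
    Tendsto (fun t : ℝ =>
        Complex.Gamma ((m + 1 - Complex.I * t) / 2) * Complex.Gamma ((m' + 1 + Complex.I * t) / 2) /
          (Complex.Gamma ((m + 1 + Complex.I * t) / 2) *
            Complex.Gamma ((m' + 1 - Complex.I * t) / 2)))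
      atTop (nhds (Complex.exp (-Complex.I * Real.pi * (m - m') / 2))) := by
  have hre {z : ℂ} (hz : -1 < z.re) : 0 < ((z + 1) / 2).re := by
    simp only [div_ofNat_re, add_re, one_re]; linarith
  have h := (tendsto_Gamma_mul_Gamma_div_Gamma_mul_Gamma (hre hm) (hre hm')).comp
    (tendsto_id.atTop_div_const (r := 2) two_pos)
  convert h using 2 with t
  · simp only [Function.comp_apply, id, ofReal_div, ofReal_ofNat]
    ring_nf
  · congr 1
    ring
end

section
/- Let m ∈ ℂ and z ∈ ℂ ∖ (−∞,0]. Then the Wronskian of 𝕀_m and 𝕀_{−m} satisfies 𝕀_m(z) · 𝕀_{−m}'(z) − 𝕀_m'(z) · 𝕀_{−m}(z) = −sin(π·m), where ' denotes the complex derivative. -/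
open Filter Asymptotics FormalMultilinearSeries Nat Complex

noncomputable def wronskian {𝕜 : Type*} [NontriviallyNormedField 𝕜] (f g : 𝕜 → 𝕜) (x : 𝕜) :
    𝕜 :=
  f x * deriv g x - deriv f x * g x

section PowerSeries

variable {𝕜 : Type*} [RCLike 𝕜] {c : ℕ → 𝕜}

def derivCoeff (c : ℕ → 𝕜) (n : ℕ) : 𝕜 := (n + 1) * c (n + 1)

lemma ofScalarsSum_eq_tsum_mul (c : ℕ → 𝕜) (q : 𝕜) :
    ofScalarsSum c q = ∑' n, c n * q ^ n := by
  simp only [ofScalars_sum_eq, smul_eq_mul]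

lemma isBigO_derivCoeff (hc : c =O[atTop] fun n => (n ! : ℝ)⁻¹) :
    derivCoeff c =O[atTop] fun n => (n ! : ℝ)⁻¹ := by
  have hsucc : (fun n : ℕ => ((n : 𝕜) + 1)) =O[atTop] fun n : ℕ => ((n : ℝ) + 1) :=
    isBigO_of_le _ fun n => by norm_cast
  refine (hsucc.mul (hc.comp_tendsto (tendsto_add_atTop_nat 1))).congr_right fun n => ?_
  simp only [Function.comp_apply, factorial_succ, cast_mul, cast_succ]
  field_simp

lemma summable_norm_mul_pow (hc : c =O[atTop] fun n => (n ! : ℝ)⁻¹) (r : ℝ) :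
    Summable fun n => ‖c n‖ * r ^ n := by
  refine summable_of_isBigO_nat (Real.summable_pow_div_factorial r) ?_
  refine (hc.norm_left.mul (isBigO_refl (fun n => r ^ n) atTop)).congr_right fun n => ?_
  rw [div_eq_inv_mul]

lemma summable_mul_pow (hc : c =O[atTop] fun n => (n ! : ℝ)⁻¹) (q : 𝕜) :
    Summable fun n => c n * q ^ n :=
  .of_norm <| by simpa only [norm_mul, norm_pow] using summable_norm_mul_pow hc ‖q‖

lemma hasDerivAt_ofScalarsSum (hc : c =O[atTop] fun n => (n ! : ℝ)⁻¹) (q : 𝕜) :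
    HasDerivAt (ofScalarsSum c) (ofScalarsSum (derivCoeff c) q) q := by
  set R := ‖q‖ + 1
  have hu : Summable fun n => ‖c n‖ * (n * R ^ (n - 1)) := by
    refine (summable_nat_add_iff 1).mp ?_
    refine (summable_norm_mul_pow (isBigO_derivCoeff hc) R).congr fun n => ?_
    simp only [derivCoeff, norm_mul, add_tsub_cancel_right]
    norm_cast
    ring
  have hbound : ∀ n, ∀ y ∈ Metric.ball (0 : 𝕜) R,
      ‖c n * (n * y ^ (n - 1))‖ ≤ ‖c n‖ * (n * R ^ (n - 1)) := by
    intro n y hy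
    rw [mem_ball_zero_iff] at hy
    rw [norm_mul, norm_mul, norm_pow, RCLike.norm_natCast]
    gcongr
  have hderiv := hasDerivAt_tsum_of_isPreconnected hu Metric.isOpen_ball
    (convex_ball (0 : 𝕜) R).isPreconnected (fun n y _ => (hasDerivAt_pow n y).const_mul (c n))
    hbound (Metric.mem_ball_self (by positivity)) (summable_mul_pow hc 0)
    (mem_ball_zero_iff.mpr (lt_add_one _))
  have hshift : Summable fun n => c (n + 1) * ((n + 1 : ℕ) * q ^ (n + 1 - 1)) := by
    refine (summable_mul_pow (isBigO_derivCoeff hc) q).congr fun n => ?_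
    simp only [derivCoeff, add_tsub_cancel_right, cast_succ]
    ring
  rw [funext (ofScalarsSum_eq_tsum_mul c), ofScalarsSum_eq_tsum_mul]
  have hval : ∑' n, c n * (n * q ^ (n - 1)) = ∑' n, derivCoeff c n * q ^ n := by
    rw [tsum_eq_zero_add' (f := fun n => c n * (n * q ^ (n - 1))) hshift]
    simp only [cast_zero, zero_mul, mul_zero, zero_add, derivCoeff, add_tsub_cancel_right,
      cast_succ]
    exact tsum_congr fun n => by ring
  exact hval ▸ hderiv

lemma hasSum_natCast_mul_mul_pow (hc : c =O[atTop] fun n => (n ! : ℝ)⁻¹) (q : 𝕜) :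
    HasSum (fun n => n * c n * q ^ n) (q * ofScalarsSum (derivCoeff c) q) := by
  refine (hasSum_nat_add_iff' 1).mp ?_
  simp only [Finset.range_one, Finset.sum_singleton, cast_zero, zero_mul, sub_zero]
  rw [ofScalarsSum_eq_tsum_mul]
  refine ((summable_mul_pow (isBigO_derivCoeff hc) q).hasSum.mul_left q).congr_fun fun n => ?_
  simp only [derivCoeff]
  push_cast
  ring

lemma differentiable_ofScalarsSum (hc : c =O[atTop] fun n => (n ! : ℝ)⁻¹) :
    Differentiable 𝕜 (ofScalarsSum (E := 𝕜) c) :=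
  fun q => (hasDerivAt_ofScalarsSum hc q).differentiableAt

end PowerSeries

lemma norm_inv_Gamma_add_one_le {s : ℂ} (hs : 1 ≤ ‖s‖) : ‖(Gamma (s + 1))⁻¹‖ ≤ ‖(Gamma s)⁻¹‖ := by
  rw [one_div_Gamma_eq_self_mul_one_div_Gamma_add_one s, norm_mul]
  exact le_mul_of_one_le_left (norm_nonneg _) hs

noncomputable def besselCoeff (m : ℂ) (n : ℕ) : ℂ := ((n ! : ℂ) * Gamma (m + n + 1))⁻¹

lemma add_mul_derivCoeff_besselCoeff (m : ℂ) (n : ℕ) :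
    (m + n + 1) * derivCoeff (besselCoeff m) n = besselCoeff m n := by
  have hΓ := one_div_Gamma_eq_self_mul_one_div_Gamma_add_one (m + n + 1)
  simp only [besselCoeff, derivCoeff, mul_inv, hΓ, factorial_succ, cast_mul, cast_succ]
  have hn : ((n : ℂ) + 1) ≠ 0 := by exact_mod_cast succ_ne_zero n
  field_simp
  ring_nf

lemma isBigO_besselCoeff (m : ℂ) : besselCoeff m =O[atTop] fun n => (n ! : ℝ)⁻¹ := by
  obtain ⟨N, hN⟩ := exists_nat_ge ‖m‖
  have hanti : AntitoneOn (fun n : ℕ => ‖(Gamma (m + n + 1))⁻¹‖) (Set.Ici N) := by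
    refine antitoneOn_nat_Ici_of_succ_le fun n hn => ?_
    have hre : 1 ≤ (m + n + 1).re := by
      have hm : -‖m‖ ≤ m.re := (abs_le.mp (abs_re_le_norm m)).1
      have hNn : (N : ℝ) ≤ n := by exact_mod_cast hn
      simp only [add_re, natCast_re, one_re]
      linarith
    simpa only [cast_succ, add_right_comm _ _ (1 : ℂ), ← add_assoc] using
      norm_inv_Gamma_add_one_le (hre.trans (re_le_norm _))
  refine IsBigO.of_bound ‖(Gamma (m + N + 1))⁻¹‖ ?_
  filter_upwards [eventually_ge_atTop N] with n hn
  rw [besselCoeff, mul_inv, norm_mul, mul_comm]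
  exact mul_le_mul (hanti Set.self_mem_Ici hn hn) (by simp) (norm_nonneg _) (norm_nonneg _)

noncomputable def besselSeries (m : ℂ) : ℂ → ℂ := ofScalarsSum (besselCoeff m)

lemma deriv_besselSeries (m : ℂ) :
    deriv (besselSeries m) = ofScalarsSum (derivCoeff (besselCoeff m)) :=
  funext fun q => (hasDerivAt_ofScalarsSum (isBigO_besselCoeff m) q).deriv

lemma deriv_deriv_besselSeries (m : ℂ) :
    deriv (deriv (besselSeries m)) = ofScalarsSum (derivCoeff (derivCoeff (besselCoeff m))) := by
  rw [deriv_besselSeries]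
  exact funext fun q =>
    (hasDerivAt_ofScalarsSum (isBigO_derivCoeff (isBigO_besselCoeff m)) q).deriv

lemma besselSeries_ode (m q : ℂ) :
    q * deriv (deriv (besselSeries m)) q + (m + 1) * deriv (besselSeries m) q =
      besselSeries m q := by
  have hc := isBigO_derivCoeff (isBigO_besselCoeff m)
  have hsum := (hasSum_natCast_mul_mul_pow hc q).add
    ((summable_mul_pow hc q).hasSum.mul_left (m + 1))
  rw [deriv_deriv_besselSeries, deriv_besselSeries,
    ofScalarsSum_eq_tsum_mul (derivCoeff (besselCoeff m)), ← hsum.tsum_eq, besselSeries,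
    ofScalarsSum_eq_tsum_mul]
  refine tsum_congr fun n => ?_
  rw [← add_mul_derivCoeff_besselCoeff]
  ring

lemma differentiable_besselSeries (m : ℂ) : Differentiable ℂ (besselSeries m) :=
  differentiable_ofScalarsSum (isBigO_besselCoeff m)

lemma differentiable_deriv_besselSeries (m : ℂ) : Differentiable ℂ (deriv (besselSeries m)) :=
  deriv_besselSeries m ▸ differentiable_ofScalarsSum (isBigO_derivCoeff (isBigO_besselCoeff m))

lemma besselSeries_zero (m : ℂ) : besselSeries m 0 = (Gamma (m + 1))⁻¹ := by
  simp [besselSeries, besselCoeff]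

lemma inv_Gamma_mul_inv_Gamma_one_sub (s : ℂ) :
    (Gamma s)⁻¹ * (Gamma (1 - s))⁻¹ = sin (Real.pi * s) / Real.pi := by
  rw [← mul_inv, Gamma_mul_Gamma_one_sub, inv_div]

lemma mul_wronskian_sub_eq_of_ode {𝕜 : Type*} [RCLike 𝕜] {F G : 𝕜 → 𝕜} (m : 𝕜)
    (hF : Differentiable 𝕜 F) (hF' : Differentiable 𝕜 (deriv F))
    (hG : Differentiable 𝕜 G) (hG' : Differentiable 𝕜 (deriv G))
    (hF_ode : ∀ q, q * deriv (deriv F) q + (m + 1) * deriv F q = F q)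
    (hG_ode : ∀ q, q * deriv (deriv G) q + (-m + 1) * deriv G q = G q) (q : 𝕜) :
    q * wronskian F G q - m * (F q * G q) = -m * (F 0 * G 0) := by
  have hderiv : ∀ q, HasDerivAt (fun q => q * wronskian F G q - m * (F q * G q)) 0 q := by
    intro q
    refine (((hasDerivAt_id' q).fun_mul (((hF q).hasDerivAt.fun_mul (hG' q).hasDerivAt).fun_sub
      ((hF' q).hasDerivAt.fun_mul (hG q).hasDerivAt))).fun_sub
      (((hF q).hasDerivAt.fun_mul (hG q).hasDerivAt).const_mul m)).congr_deriv ?_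
    linear_combination F q * hG_ode q - G q * hF_ode q
  rw [is_const_of_deriv_eq_zero (fun q => (hderiv q).differentiableAt) (fun q => (hderiv q).deriv)
    q 0]
  ring

lemma besselSeries_wronskian (m q : ℂ) :
    q * wronskian (besselSeries m) (besselSeries (-m)) q -
      m * (besselSeries m q * besselSeries (-m) q) = -(sin (Real.pi * m) / Real.pi) := by
  rw [mul_wronskian_sub_eq_of_ode m (differentiable_besselSeries m)
    (differentiable_deriv_besselSeries m) (differentiable_besselSeries (-m))
    (differentiable_deriv_besselSeries (-m)) (besselSeries_ode m) (besselSeries_ode (-m)) q]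
  rw [besselSeries_zero, besselSeries_zero, neg_mul, ← mul_assoc,
    ← one_div_Gamma_eq_self_mul_one_div_Gamma_add_one, neg_add_eq_sub,
    inv_Gamma_mul_inv_Gamma_one_sub]

lemma div_two_mem_slitPlane {z : ℂ} (hz : z ∈ slitPlane) : z / 2 ∈ slitPlane := by
  simpa [mem_slitPlane_iff] using hz

lemma Ibes_eq_mul_besselSeries (m : ℂ) {z : ℂ} (hz : z ≠ 0) :
    Ibes m z = Real.sqrt Real.pi * (z / 2) ^ (m + 1 / 2) * besselSeries m ((z / 2) ^ 2) := by
  rw [Ibes, besselSeries, ofScalarsSum_eq_tsum_mul, ← tsum_mul_left]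
  refine tsum_congr fun n => ?_
  rw [show 2 * (n : ℂ) + m + 1 / 2 = (m + 1 / 2) + (2 * n : ℕ) by push_cast; ring,
    cpow_add _ _ (div_ne_zero hz two_ne_zero), cpow_natCast, pow_mul, besselCoeff]
  ring

lemma hasDerivAt_Ibes (m : ℂ) {z : ℂ} (hz : z ∈ slitPlane) :
    HasDerivAt (Ibes m) (Real.sqrt Real.pi / 2 * (z / 2) ^ (m + 1 / 2) *
      ((m + 1 / 2) / (z / 2) * besselSeries m ((z / 2) ^ 2) +
        2 * (z / 2) * deriv (besselSeries m) ((z / 2) ^ 2))) z := by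
  have hz0 := slitPlane_ne_zero hz
  have hhalf := (hasDerivAt_id' z).div_const 2
  have hpow := hhalf.cpow_const (c := m + 1 / 2) (div_two_mem_slitPlane hz)
  have hser := (differentiable_besselSeries m _).hasDerivAt.comp z (hhalf.fun_pow 2)
  refine (((hpow.const_mul (Real.sqrt Real.pi : ℂ)).mul hser).congr_of_eventuallyEq ?_).congr_deriv
    ?_
  · filter_upwards [eventually_ne_nhds hz0] with x hx using Ibes_eq_mul_besselSeries m hx
  · rw [Function.comp_apply, cpow_sub _ _ (div_ne_zero hz0 two_ne_zero), cpow_one]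
    field_simp
    ring

lemma wronskian_Ibes (m : ℂ) {z : ℂ} (hz : z ∈ slitPlane) :
    wronskian (Ibes m) (Ibes (-m)) z = Real.pi *
      ((z / 2) ^ 2 * wronskian (besselSeries m) (besselSeries (-m)) ((z / 2) ^ 2) -
        m * (besselSeries m ((z / 2) ^ 2) * besselSeries (-m) ((z / 2) ^ 2))) := by
  have hz0 := slitPlane_ne_zero hz
  rw [wronskian, wronskian, (hasDerivAt_Ibes m hz).deriv, (hasDerivAt_Ibes (-m) hz).deriv,
    Ibes_eq_mul_besselSeries m hz0, Ibes_eq_mul_besselSeries (-m) hz0]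
  set w := z / 2
  have hw : w ≠ 0 := div_ne_zero hz0 two_ne_zero
  have hsqrt : (Real.sqrt Real.pi : ℂ) * Real.sqrt Real.pi = Real.pi := by
    exact_mod_cast Real.mul_self_sqrt Real.pi_pos.le
  have hpow : w ^ (m + 1 / 2) * w ^ (-m + 1 / 2) = w := by
    rw [← cpow_add _ _ hw, add_add_add_comm, add_neg_cancel, zero_add, add_halves, cpow_one]
  calc _ = (Real.sqrt Real.pi * Real.sqrt Real.pi) * (w ^ (m + 1 / 2) * w ^ (-m + 1 / 2)) / w *
      (w ^ 2 * (besselSeries m (w ^ 2) * deriv (besselSeries (-m)) (w ^ 2) -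
        deriv (besselSeries m) (w ^ 2) * besselSeries (-m) (w ^ 2)) -
      m * (besselSeries m (w ^ 2) * besselSeries (-m) (w ^ 2))) := by
        field_simp
        ring
    _ = _ := by rw [hsqrt, hpow, mul_div_cancel_right₀ _ hw]

/-- Wronskian identity: `W(𝕀_m, 𝕀_{−m})(z) = −sin(πm)` on `ℂ ∖ (−∞,0]`. -/
theorem stmt18 (m z : ℂ) (hz : z ∈ Complex.slitPlane) :
    Ibes m z * deriv (Ibes (-m)) z - deriv (Ibes m) z * Ibes (-m) z =
      -Complex.sin (Real.pi * m) := by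
  change wronskian (Ibes m) (Ibes (-m)) z = _
  rw [wronskian_Ibes m hz, besselSeries_wronskian, mul_neg,
    mul_div_cancel₀ _ (ofReal_ne_zero.mpr Real.pi_ne_zero)]
end

section
/- Let m ∈ ℂ and let μ ∈ ℝ with μ ≠ 0. Suppose f : (0,∞) → ℂ is twice continuously differentiable, satisfies −f''(x) + (m² − 1/4)·x^{−2}·f(x) = μ²·f(x) for all x > 0, and is square integrable: ∫₀^∞ |f(x)|² dx < ∞. Then f is identically zero. -/
/-!
Write `f'' = (V - μ²) f` with `|V x| ≤ C / x²`. The energy `E = |f'|² + μ² |f|²` satisfies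
`|E'| ≤ (|V| / |μ|) E`, so `E x · exp (-C / (|μ| x))` is nondecreasing and `E` stays above some
`δ > 0` beyond any point where `f ≠ 0`. Once `|V| ≤ μ²`, the quantity `G = Re (conj f · f')`
satisfies `G' ≥ E - 3 μ² |f|² ≥ δ - 3 μ² |f|²`, so square integrability of `f` forces `G → ∞`.
Since `(|f|²)' = 2 G`, also `|f|² → ∞`, contradicting square integrability.
-/

open MeasureTheory Set Filter Real ComplexConjugate

lemma monotoneOn_Ici_of_hasDerivAt_nonneg {F F' : ℝ → ℝ} {a : ℝ}
    (hF : ∀ x ∈ Ici a, HasDerivAt F (F' x) x) (hF' : ∀ x ∈ Ici a, 0 ≤ F' x) :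
    MonotoneOn F (Ici a) :=
  monotoneOn_of_hasDerivWithinAt_nonneg (convex_Ici a)
    (fun x hx => (hF x hx).continuousAt.continuousWithinAt)
    (fun x hx => (hF x (interior_subset hx)).hasDerivWithinAt)
    (fun x hx => hF' x (interior_subset hx))

lemma monotoneOn_mul_exp_neg_div {E E' : ℝ → ℝ} {a c : ℝ} (ha : 0 < a)
    (hE : ∀ x ∈ Ici a, HasDerivAt E (E' x) x) (hE' : ∀ x ∈ Ici a, -(c / x ^ 2 * E x) ≤ E' x) :
    MonotoneOn (fun x => E x * exp (-c / x)) (Ici a) := by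
  refine monotoneOn_Ici_of_hasDerivAt_nonneg
    (F' := fun x => E' x * exp (-c / x) + E x * (exp (-c / x) * (c / x ^ 2)))
    (fun x hx => ?_) (fun x hx => ?_)
  · have hx0 : x ≠ 0 := (ha.trans_le hx).ne'
    exact (hE x hx).mul ((((hasDerivAt_inv hx0).const_mul (-c)).congr_deriv (by ring)).exp)
  · have := hE' x hx
    have := exp_pos (-c / x)
    nlinarith

lemma tendsto_atTop_of_le_deriv_add_integrable {G G' N : ℝ → ℝ} {a δ k : ℝ} (hδ : 0 < δ)
    (hk : 0 ≤ k) (hN0 : ∀ x, 0 ≤ N x) (hN : IntegrableOn N (Ioi a))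
    (hG : ∀ᶠ x in atTop, HasDerivAt G (G' x) x ∧ δ ≤ G' x + k * N x) :
    Tendsto G atTop atTop := by
  obtain ⟨b, hb⟩ := eventually_atTop.1 (hG.and (eventually_gt_atTop a))
  have hbound : ∀ x ≥ b, δ * x + (G b - δ * b - k * ∫ t in Ioi a, N t) ≤ G x := by
    intro x hx
    have hNbx : IntegrableOn N (Icc b x) := hN.mono_set fun t ht => (hb b le_rfl).2.trans_le ht.1
    have hFTC := intervalIntegral.integral_le_sub_of_hasDeriv_right_of_le
      (φ := fun t => δ - k * N t) hx
      (fun t ht => (hb t ht.1).1.1.continuousAt.continuousWithinAt)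
      (fun t ht => (hb t ht.1.le).1.1.hasDerivWithinAt)
      ((integrableOn_const measure_Icc_lt_top.ne).sub (hNbx.const_mul k))
      (fun t ht => by linarith [(hb t ht.1.le).1.2])
    rw [intervalIntegral.integral_sub intervalIntegrable_const
      (((intervalIntegrable_iff_integrableOn_Icc_of_le hx).2 hNbx).const_mul k),
      intervalIntegral.integral_const_mul, intervalIntegral.integral_const, smul_eq_mul] at hFTC
    have hNint : ∫ t in b..x, N t ≤ ∫ t in Ioi a, N t := by
      rw [intervalIntegral.integral_of_le hx]
      exact setIntegral_mono_set hN (Eventually.of_forall hN0)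
        (Eventually.of_forall fun t ht => (hb b le_rfl).2.trans ht.1)
    nlinarith
  exact tendsto_atTop_mono' atTop (eventually_atTop.2 ⟨b, hbound⟩)
    (tendsto_atTop_add_const_right _ _ (tendsto_id.const_mul_atTop hδ))

lemma tendsto_atTop_of_tendsto_deriv_atTop {F F' : ℝ → ℝ}
    (hF : ∀ᶠ x in atTop, HasDerivAt F (F' x) x) (hF' : Tendsto F' atTop atTop) :
    Tendsto F atTop atTop :=
  tendsto_atTop_of_le_deriv_add_integrable (N := 0) (a := 0) (k := 0) one_pos le_rfl
    (fun _ => le_rfl) integrableOn_zero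
    (hF.and (hF'.eventually_ge_atTop 1) |>.mono fun _ h => ⟨h.1, by simpa using h.2⟩)

lemma not_tendsto_atTop_of_integrableOn_Ioi {N : ℝ → ℝ} {a : ℝ} (hN : IntegrableOn N (Ioi a)) :
    ¬Tendsto N atTop atTop := by
  intro hlim
  refine not_integrableOn_of_tendsto_norm_atTop_of_deriv_isBigO_filter atTop (Ioi_mem_atTop a)
    (Eventually.of_forall fun _ => differentiableAt_id) tendsto_norm_atTop_atTop ?_ hN
  refine Asymptotics.IsBigO.of_bound 1 ((hlim.eventually_ge_atTop 1).mono fun x hx => ?_)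
  simpa [abs_of_pos (zero_lt_one.trans_le hx)] using hx

lemma abs_two_mul_re_le (v a b : ℂ) {μ : ℝ} (hμ : μ ≠ 0) :
    |2 * (v * (a * conj b)).re| ≤ ‖v‖ / |μ| * (‖b‖ ^ 2 + μ ^ 2 * ‖a‖ ^ 2) := by
  have hμ' : 0 < |μ| := abs_pos.2 hμ
  have hamgm : 2 * |μ| * (‖a‖ * ‖b‖) ≤ ‖b‖ ^ 2 + μ ^ 2 * ‖a‖ ^ 2 := by
    nlinarith [sq_nonneg (‖b‖ - |μ| * ‖a‖), sq_abs μ]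
  calc |2 * (v * (a * conj b)).re| ≤ 2 * (‖v‖ * (‖a‖ * ‖b‖)) := by
        rw [abs_mul, abs_two]
        gcongr
        exact (Complex.abs_re_le_norm _).trans (by simp)
    _ = ‖v‖ / |μ| * (2 * |μ| * (‖a‖ * ‖b‖)) := by field_simp
    _ ≤ _ := by gcongr

section

variable {f f' : ℝ → ℂ} {x μ : ℝ} {v : ℂ}

lemma hasDerivAt_energy (hf : HasDerivAt f (f' x) x)
    (hf' : HasDerivAt f' ((v - μ ^ 2) * f x) x) :
    HasDerivAt (fun t => ‖f' t‖ ^ 2 + μ ^ 2 * ‖f t‖ ^ 2) (2 * (v * (f x * conj (f' x))).re) x := by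
  refine (hf'.norm_sq.add (hf.norm_sq.const_mul (μ ^ 2))).congr_deriv ?_
  simp only [Complex.inner, Complex.mul_re, Complex.sub_re, Complex.sub_im, Complex.mul_im,
    Complex.conj_re, Complex.conj_im, ← Complex.ofReal_pow, Complex.ofReal_re, Complex.ofReal_im]
  ring

lemma hasDerivAt_inner_deriv (hf : HasDerivAt f (f' x) x)
    (hf' : HasDerivAt f' ((v - μ ^ 2) * f x) x) :
    HasDerivAt (fun t => inner ℝ (f t) (f' t)) (‖f' x‖ ^ 2 + (v.re - μ ^ 2) * ‖f x‖ ^ 2) x := by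
  refine (hf.inner ℝ hf').congr_deriv ?_
  simp only [Complex.inner, Complex.mul_re, Complex.sub_re, Complex.sub_im, Complex.mul_im,
    Complex.conj_re, Complex.conj_im, ← Complex.ofReal_pow, Complex.ofReal_re, Complex.ofReal_im,
    Complex.sq_norm, Complex.normSq_apply]
  ring

end

theorem eq_zero_of_hasDerivAt_of_integrableOn_Ioi {f f' V : ℝ → ℂ} {μ a C : ℝ} (hμ : μ ≠ 0)
    (ha : 0 < a) (hf : ∀ x ∈ Ici a, HasDerivAt f (f' x) x)
    (hf' : ∀ x ∈ Ici a, HasDerivAt f' ((V x - μ ^ 2) * f x) x)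
    (hV : ∀ x ∈ Ici a, ‖V x‖ ≤ C / x ^ 2) (hL2 : IntegrableOn (fun x => ‖f x‖ ^ 2) (Ioi a)) :
    f a = 0 := by
  by_contra hfa
  set N : ℝ → ℝ := fun t => ‖f t‖ ^ 2
  set E : ℝ → ℝ := fun t => ‖f' t‖ ^ 2 + μ ^ 2 * N t
  have hC : 0 ≤ C := by
    have := (le_div_iff₀ (by positivity)).1 ((norm_nonneg _).trans (hV a self_mem_Ici))
    rwa [zero_mul] at this
  set δ := E a * exp (-(C / |μ|) / a)
  have hδ : 0 < δ := by
    have : 0 < N a := by positivity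
    positivity
  have hmono : MonotoneOn (fun x => E x * exp (-(C / |μ|) / x)) (Ici a) := by
    refine monotoneOn_mul_exp_neg_div ha (fun x hx => hasDerivAt_energy (hf x hx) (hf' x hx))
      fun x hx => neg_le_of_abs_le ((abs_two_mul_re_le _ _ _ hμ).trans ?_)
    calc ‖V x‖ / |μ| * E x ≤ C / x ^ 2 / |μ| * E x := by gcongr; exact hV x hx
      _ = _ := by ring
  have hE : ∀ x ∈ Ici a, δ ≤ E x := fun x hx =>
    (hmono self_mem_Ici hx hx).trans (mul_le_of_le_one_right (by positivity) (exp_le_one_iff.2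
      (div_nonpos_of_nonpos_of_nonneg (neg_nonpos.2 (by positivity)) (ha.trans_le hx).le)))
  have hVsmall : ∀ᶠ x in atTop, ‖V x‖ ≤ μ ^ 2 := by
    have hdecay : Tendsto (fun x : ℝ => C / x ^ 2) atTop (nhds 0) :=
      tendsto_const_nhds.div_atTop (tendsto_pow_atTop two_ne_zero)
    filter_upwards [hdecay.eventually (eventually_le_nhds (by positivity : 0 < μ ^ 2)),
      eventually_ge_atTop a] with x hCx hx using (hV x hx).trans hCx
  have hG : Tendsto (fun t => inner ℝ (f t) (f' t)) atTop atTop := by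
    refine tendsto_atTop_of_le_deriv_add_integrable hδ (k := 3 * μ ^ 2)
      (G' := fun x => ‖f' x‖ ^ 2 + ((V x).re - μ ^ 2) * N x) (by positivity)
      (fun _ => by positivity) hL2 ?_
    filter_upwards [hVsmall, eventually_ge_atTop a] with x hVx hx
    refine ⟨hasDerivAt_inner_deriv (hf x hx) (hf' x hx), ?_⟩
    have hVre : 0 ≤ (V x).re + μ ^ 2 :=
      neg_le_iff_add_nonneg.1 (neg_le_of_abs_le ((Complex.abs_re_le_norm (V x)).trans hVx))
    have hEx : δ ≤ ‖f' x‖ ^ 2 + μ ^ 2 * N x := hE x hx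
    nlinarith [mul_nonneg hVre (by positivity : 0 ≤ N x)]
  refine not_tendsto_atTop_of_integrableOn_Ioi hL2 (tendsto_atTop_of_tendsto_deriv_atTop ?_
    (hG.const_mul_atTop two_pos))
  filter_upwards [eventually_ge_atTop a] with x hx using (hf x hx).norm_sq

theorem stmt19_general (m : ℂ) (μ : ℝ) (hμ : μ ≠ 0) (f : ℝ → ℂ)
    (hf : ∀ x ∈ Set.Ioi (0 : ℝ), DifferentiableAt ℝ f x)
    (hf' : ∀ x ∈ Set.Ioi (0 : ℝ), DifferentiableAt ℝ (deriv f) x)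
    (hode : ∀ x ∈ Set.Ioi (0 : ℝ),
      -(deriv (deriv f) x) + (m ^ 2 - 1 / 4) * ((x : ℂ)) ^ (-2 : ℤ) * f x = ((μ : ℂ)) ^ 2 * f x)
    (hL2 : IntegrableOn (fun x : ℝ => ‖f x‖ ^ 2) (Set.Ioi (0 : ℝ))) :
    ∀ x ∈ Set.Ioi (0 : ℝ), f x = 0 := by
  intro x₀ hx₀
  have hpos : ∀ x ∈ Ici x₀, x ∈ Ioi (0 : ℝ) := fun x hx => mem_Ioi.2 (lt_of_lt_of_le hx₀ hx)
  refine eq_zero_of_hasDerivAt_of_integrableOn_Ioi (C := ‖m ^ 2 - 1 / 4‖)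
    (V := fun x => (m ^ 2 - 1 / 4) * (x : ℂ) ^ (-2 : ℤ)) hμ hx₀
    (fun x hx => (hf x (hpos x hx)).hasDerivAt) (fun x hx => ?_) (fun x hx => ?_)
    (hL2.mono_set (Ioi_subset_Ioi (le_of_lt hx₀)))
  · refine (hf' x (hpos x hx)).hasDerivAt.congr_deriv ?_
    linear_combination -hode x (hpos x hx)
  · have hx0 : 0 < x := hpos x hx
    simp [abs_of_pos hx0, div_eq_mul_inv]

/-- No positive eigenvalues: a twice continuously differentiable, square-integrable solution
of `−f'' + (m² − 1/4)x⁻² f = μ² f` on `(0,∞)` with `μ ≠ 0` vanishes identically. -/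
theorem stmt19 (m : ℂ) (μ : ℝ) (hμ : μ ≠ 0) (f : ℝ → ℂ)
    (hf : ∀ x ∈ Set.Ioi (0 : ℝ), DifferentiableAt ℝ f x)
    (hf' : ∀ x ∈ Set.Ioi (0 : ℝ), DifferentiableAt ℝ (deriv f) x)
    (hf'' : ContinuousOn (deriv (deriv f)) (Set.Ioi (0 : ℝ)))
    (hode : ∀ x ∈ Set.Ioi (0 : ℝ),
      -(deriv (deriv f) x) + (m ^ 2 - 1 / 4) * ((x : ℂ)) ^ (-2 : ℤ) * f x = ((μ : ℂ)) ^ 2 * f x)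
    (hL2 : IntegrableOn (fun x : ℝ => ‖f x‖ ^ 2) (Set.Ioi (0 : ℝ))) :
    ∀ x ∈ Set.Ioi (0 : ℝ), f x = 0 :=
  stmt19_general m μ hμ f hf hf' hode hL2
end
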